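/- Let Δ be a simplicial complex of dimension d-1 that is Cohen-Macaulay over a field k, and let Γ be a subcomplex of Δ of dimension d-2. Then every (d-2)-cycle in the simplicial chain complex of Γ over k can be written as a finite sum of (d-2)-cycles each supported on Γ ∩ (the full simplex on a facet of Δ). More specifically: if P is a finite poset with minimum 0̂ such that P minus 0̂ is Cohen-Macaulay over k of rank d-1, and Q is obtained from P by removing 0̂ and all maximal elements, then H̃_{d-2}(Δ(Q); k) is spanned by the images of the maps H̃_{d-2}(Δ((0̂,y)); k) → H̃_{d-2}(Δ(Q); k) induced by inclusion, as y ranges over the maximal elements of P. -/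

import Mathlib

open Finset

/-- The Möbius function of a finite partial order, valued in `ℤ`. -/
noncomputable def pmu (α : Type*) [PartialOrder α] [Finite α] : α → α → ℤ :=
  letI := Fintype.ofFinite α
  letI := Classical.decEq α
  letI : @DecidableRel α α (· ≤ ·) := Classical.decRel _
  letI : @DecidableRel α α (· < ·) := Classical.decRel _
  letI := Fintype.toLocallyFiniteOrder (α := α)
  fun x y => IncidenceAlgebra.mu ℤ x y

variable {α : Type*} [PartialOrder α]

/-- `c` is a maximal chain of the subposet `S`. -/
def IsMaxChainIn (S : Set α) (c : Finset α) : Prop :=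
  ↑c ⊆ S ∧ IsChain (· ≤ ·) (c : Set α) ∧
    ∀ c' : Finset α, ↑c' ⊆ S → IsChain (· ≤ ·) (c' : Set α) → c ⊆ c' → c = c'

/-- The interval `[x,y]` is graded of rank `r`: every maximal chain of it has `r+1` elements. -/
def IntervalGraded (x y : α) (r : ℕ) : Prop :=
  ∀ c : Finset α, IsMaxChainIn (Set.Icc x y) c → c.card = r + 1

/-- The subposet `S` is graded of rank `d`: every maximal chain of `S` has `d+1` elements. -/
def GradedRank (S : Set α) (d : ℕ) : Prop :=
  ∀ c : Finset α, IsMaxChainIn S c → c.card = d + 1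

/-- A finite poset is lower Eulerian with rank function `ρ` on intervals: every interval
`[x,y]` is graded of rank `ρ x y` with `μ(x,y) = (-1)^{ρ x y}` (a minimum element is
required separately, via `OrderBot`). -/
def LowerEulerianWith (α : Type*) [PartialOrder α] [Finite α] (ρ : α → α → ℕ) : Prop :=
  ∀ x y : α, x ≤ y → IntervalGraded x y (ρ x y) ∧ pmu α x y = (-1) ^ ρ x y

instance (α : Type*) [Fintype α] : Fintype (WithTop α) := instFintypeOption
instance (α : Type*) [Fintype α] : Fintype (WithBot α) := instFintypeOption

instance (α : Type*) [Finite α] : Finite (WithTop α) :=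
  letI := Fintype.ofFinite α; @Finite.of_fintype (WithTop α) (instFintypeOption (α := α))
instance (α : Type*) [Finite α] : Finite (WithBot α) :=
  letI := Fintype.ofFinite α; @Finite.of_fintype (WithBot α) (instFintypeOption (α := α))

open scoped Classical in
/-- The order complex of the subposet `S`: the collection of finite chains contained in `S`. -/
noncomputable def chainsIn {α : Type*} [PartialOrder α] [Fintype α] (S : Set α) :
    Finset (Finset α) :=
  Finset.univ.filter fun s => ↑s ⊆ S ∧ IsChain (· ≤ ·) (s : Set α)

/-- The reduced Euler characteristic of a finite simplicial complex
(`χ̃ = Σ_{σ ∈ K} (-1)^{|σ|-1}`, the empty face contributing `-1`). -/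
def redEuler {V : Type*} (K : Finset (Finset V)) : ℤ :=
  -∑ s ∈ K, (-1 : ℤ) ^ s.card

/-- The geometric realization of a finite simplicial complex `K`, as the space of convex
weightings supported on faces of `K`, topologized as a subspace of `V → ℝ`. -/
def realiz {V : Type*} [Fintype V] (K : Finset (Finset V)) : Type _ :=
  {f : V → ℝ // (∃ s ∈ K, ∀ v, f v ≠ 0 → v ∈ s) ∧ (∀ v, 0 ≤ f v) ∧ ∑ v, f v = 1}

instance {V : Type*} [Fintype V] (K : Finset (Finset V)) : TopologicalSpace (realiz K) :=
  instTopologicalSpaceSubtype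

section Homology

open Finset

variable (k : Type*) [Field k] {V : Type*} [Fintype V]

/-- An auxiliary linear order on the (finite) vertex set, used to orient simplices. -/
noncomputable def vOrd (V : Type*) [Fintype V] : LinearOrder V :=
  LinearOrder.lift' (Fintype.equivFin V) (Equiv.injective _)

/-- The position of the vertex `v` in the face `s`, with respect to the auxiliary order. -/
noncomputable def vIdx (s : Finset V) (v : V) : ℕ :=
  letI := vOrd V
  letI := Classical.decEq V
  (s.sort (· ≤ ·)).idxOf v

/-- The space of simplicial `k`-chains on all faces with `n` vertices
(`n = 0` corresponds to the empty face, giving augmented/reduced chains). -/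
abbrev ChSp (k : Type*) [Field k] (V : Type*) (n : ℕ) := {s : Finset V // s.card = n} →₀ k

/-- The simplicial boundary map, from chains on faces with `n+1` vertices to chains on
faces with `n` vertices. -/
noncomputable def bdry (n : ℕ) : ChSp k V (n + 1) →ₗ[k] ChSp k V n :=
  letI := Classical.decEq V
  Finsupp.lsum k fun s =>
    LinearMap.smulRight (LinearMap.id : k →ₗ[k] k)
      (∑ v ∈ s.1.attach,
        ((-1 : k) ^ vIdx s.1 v.1) •
          Finsupp.single ⟨s.1.erase v.1, by
            simp [Finset.card_erase_of_mem v.2, s.2]⟩ (1 : k))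

/-- The submodule of chains supported on faces of the complex `K`. -/
def suppIn (K : Finset (Finset V)) (n : ℕ) : Submodule k (ChSp k V n) where
  carrier := {c | ∀ s ∈ c.support, (s : {s : Finset V // s.card = n}).1 ∈ K}
  add_mem' := by
    classical
    intro a b ha hb s hs
    rcases Finset.mem_union.1 (Finsupp.support_add hs) with h | h
    · exact ha s h
    · exact hb s h
  zero_mem' := by simp
  smul_mem' := by
    classical
    intro t a ha s hs
    exact ha s (Finsupp.support_smul hs)

/-- The reduced cycles of the complex `K` in chain degree `m` (faces with `m` vertices,
i.e. geometric dimension `m-1`). -/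
noncomputable def zcyc (K : Finset (Finset V)) : ∀ m : ℕ, Submodule k (ChSp k V m)
  | 0 => suppIn k K 0
  | (n + 1) => suppIn k K (n + 1) ⊓ LinearMap.ker (bdry k n)

/-- The boundaries of the complex `K` in chain degree `m`. -/
noncomputable def zbnd (K : Finset (Finset V)) (m : ℕ) : Submodule k (ChSp k V m) :=
  Submodule.map (bdry k m) (suppIn k K (m + 1))

/-- Vanishing of the reduced homology `H̃_i(K; k)` (for `i : ℤ`): every reduced `i`-cycle
supported on `K` is the boundary of a chain supported on `K`. -/
noncomputable def HVanish (K : Finset (Finset V)) (i : ℤ) : Prop :=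
  if i < -1 then True else zcyc k K (i + 1).toNat ≤ zbnd k K (i + 1).toNat

/-- The dimension of a finite simplicial complex, as an integer (`-1` for the void or
empty complex). -/
def dimC (K : Finset (Finset V)) : ℤ := (↑(K.sup Finset.card) : ℤ) - 1

open scoped Classical in
/-- The link of a face `σ` in the complex `K`. -/
noncomputable def linkC (K : Finset (Finset V)) (σ : Finset V) : Finset (Finset V) :=
  Finset.univ.filter fun γ => Disjoint γ σ ∧ γ ∪ σ ∈ K

/-- A complex is closed under taking subsets of faces. -/
def DownClosed (K : Finset (Finset V)) : Prop :=
  ∀ s t : Finset V, t ∈ K → s ⊆ t → s ∈ K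

/-- `K` is Cohen-Macaulay over `k`: for every face `σ` of `K` (including the empty face),
`H̃_i(link_K σ; k) = 0` for all `i < dim link_K σ`. -/
noncomputable def IsCM (K : Finset (Finset V)) : Prop :=
  ∀ σ ∈ K, ∀ i : ℤ, i < dimC (linkC K σ) → HVanish k (linkC K σ) i

open scoped Classical in
/-- The deletion of a set `U` of vertices from `K`: all faces disjoint from `U`. -/
noncomputable def delV (K : Finset (Finset V)) (U : Finset V) : Finset (Finset V) :=
  K.filter fun σ => Disjoint σ U

/-- `K` is doubly Cohen-Macaulay over `k`: it is Cohen-Macaulay and deleting any vertex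
leaves a Cohen-Macaulay complex of the same dimension. -/
noncomputable def Is2CM (K : Finset (Finset V)) : Prop :=
  IsCM k K ∧ ∀ v : V, {v} ∈ K → IsCM k (delV K {v}) ∧ dimC (delV K {v}) = dimC K

/-- `s` is a facet (maximal face) of `K`. -/
def IsFacet (K : Finset (Finset V)) (s : Finset V) : Prop :=
  s ∈ K ∧ ∀ t ∈ K, s ⊆ t → s = t

/-- `K` is pure: all facets have `m` vertices. -/
def PureCard (K : Finset (Finset V)) (m : ℕ) : Prop :=
  ∀ s : Finset V, IsFacet K s → s.card = m

end Homology

/-!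
Since `Δ(P ∖ 0̂)` is Cohen-Macaulay of dimension `d - 1`, its reduced homology vanishes in
degree `d - 2`, so a `(d-2)`-cycle `z` of `Δ(Q)` is the boundary of a `(d-1)`-chain `c` of
`Δ(P ∖ 0̂)`. Every face of `c` is a chain of maximal length, so its top element `y` is maximal
in `P`. Splitting `c = ∑ y, c_y` by top element, each `∂ c_y` is a cycle, and it lies in
`Δ((0̂, y))`: a face of `∂ c_y` containing `y` is not a face of any other `∂ c_y'`, so its
coefficient is that of `z`, which vanishes because `z` avoids the maximal elements.
-/

theorem List.idxOf_eq_length_filter_lt {β : Type*} [LinearOrder β] [BEq β] [LawfulBEq β]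
    {l : List β} (hl : l.Pairwise (· < ·)) {v : β} (hv : v ∈ l) :
    l.idxOf v = (l.filter (· < v)).length := by
  induction l with
  | nil => simp at hv
  | cons x t ih =>
    obtain rfl | hxv := eq_or_ne x v
    · rw [List.idxOf_cons_self, List.filter_cons_of_neg (by simp), eq_comm,
        List.length_eq_zero_iff, List.filter_eq_nil_iff]
      simpa using fun y hy => (List.rel_of_pairwise_cons hl hy).le
    · have hvt : v ∈ t := (List.mem_cons.1 hv).resolve_left hxv.symm
      have hxv' : x < v := List.rel_of_pairwise_cons hl hvt
      rw [List.idxOf_cons_ne _ hxv, List.filter_cons_of_pos (by simpa using hxv'), List.length_cons,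
        ih hl.of_cons hvt]

namespace Finset

variable {β : Type*} [LinearOrder β] {s : Finset β} {v w : β}

theorem idxOf_sort_eq_card_filter_lt [BEq β] [LawfulBEq β] (hv : v ∈ s) :
    (s.sort (· ≤ ·)).idxOf v = #{u ∈ s | u < v} := by
  rw [List.idxOf_eq_length_filter_lt s.sortedLT_sort.pairwise ((s.mem_sort _).2 hv),
    ← List.countP_eq_length_filter, ← Multiset.coe_countP, sort_eq,
    Multiset.countP_eq_card_filter]
  rfl

theorem idxOf_sort_erase_of_lt [DecidableEq β] (hv : v ∈ s) (hvw : v < w) :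
    ((s.erase w).sort (· ≤ ·)).idxOf v = (s.sort (· ≤ ·)).idxOf v := by
  rw [idxOf_sort_eq_card_filter_lt (mem_erase.2 ⟨hvw.ne, hv⟩), idxOf_sort_eq_card_filter_lt hv,
    filter_erase, erase_eq_of_notMem (by simp [hvw.le, not_lt_of_ge])]

theorem idxOf_sort_erase_add_one [DecidableEq β] (hv : v ∈ s) (hw : w ∈ s) (hvw : v < w) :
    ((s.erase v).sort (· ≤ ·)).idxOf w + 1 = (s.sort (· ≤ ·)).idxOf w := by
  rw [idxOf_sort_eq_card_filter_lt (mem_erase.2 ⟨hvw.ne', hw⟩), idxOf_sort_eq_card_filter_lt hw,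
    filter_erase, card_erase_add_one (by simp [hv, hvw])]

end Finset

section Orientation

variable {V : Type*} [Fintype V] [DecidableEq V]

theorem neg_one_pow_vIdx_erase_add {R : Type*} [CommRing R] {s : Finset V} {v w : V}
    (hv : v ∈ s) (hw : w ∈ s) (hvw : v ≠ w) :
    (-1 : R) ^ vIdx s v * (-1) ^ vIdx (s.erase v) w
      + (-1) ^ vIdx s w * (-1) ^ vIdx (s.erase w) v = 0 := by
  obtain rfl := Subsingleton.elim ‹DecidableEq V› (Classical.decEq V)
  -- `vIdx` is computed with `Classical.decEq V`; `erase` below must use the same instance.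
  let _ := Classical.decEq V
  have key : ∀ {a b : V}, a ∈ s → b ∈ s → (vOrd V).lt a b →
      (-1 : R) ^ vIdx s a * (-1) ^ vIdx (s.erase a) b
        + (-1) ^ vIdx s b * (-1) ^ vIdx (s.erase b) a = 0 := by
    intro a b ha hb hab
    have hba : vIdx (s.erase b) a = vIdx s a :=
      @Finset.idxOf_sort_erase_of_lt V (vOrd V) s a b _ ha hab
    have hab' : vIdx (s.erase a) b + 1 = vIdx s b :=
      @Finset.idxOf_sort_erase_add_one V (vOrd V) s a b _ ha hb hab
    rw [hba, ← hab', pow_succ]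
    ring
  rcases @lt_or_gt_of_ne V (vOrd V) v w hvw with h | h
  · exact key hv hw h
  · rw [add_comm]
    exact key hw hv h

end Orientation

section Boundary

variable (k : Type*) [Field k] {V : Type*} [Fintype V]

noncomputable def faceChain (n : ℕ) (s : Finset V) : ChSp k V n :=
  if h : s.card = n then Finsupp.single ⟨s, h⟩ 1 else 0

variable {k} [DecidableEq V] {n : ℕ}

theorem bdry_single (s : Finset V) (hs : s.card = n + 1) (b : k) :
    bdry k n (Finsupp.single ⟨s, hs⟩ b)
      = b • ∑ v ∈ s, (-1 : k) ^ vIdx s v • faceChain k n (s.erase v) := by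
  obtain rfl := Subsingleton.elim ‹DecidableEq V› (Classical.decEq V)
  rw [bdry, Finsupp.lsum_single, LinearMap.smulRight_apply, LinearMap.id_apply, ← s.sum_attach]
  refine congrArg _ (Finset.sum_congr rfl fun v _ => ?_)
  rw [faceChain, dif_pos]

theorem bdry_faceChain {s : Finset V} (hs : s.card = n + 1) :
    bdry k n (faceChain k (n + 1) s)
      = ∑ v ∈ s, (-1 : k) ^ vIdx s v • faceChain k n (s.erase v) := by
  rw [faceChain, dif_pos hs, bdry_single, one_smul]

theorem bdry_bdry (c : ChSp k V (n + 2)) : bdry k n (bdry k (n + 1) c) = 0 := by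
  induction c using Finsupp.induction_linear with
  | zero => simp
  | add f g hf hg => rw [map_add, map_add, hf, hg, add_zero]
  | single t b =>
    obtain ⟨s, hs⟩ := t
    let F : V × V → ChSp k V n := fun p =>
      ((-1 : k) ^ vIdx s p.1 * (-1) ^ vIdx (s.erase p.1) p.2) •
        faceChain k n ((s.erase p.1).erase p.2)
    have swap_cancel : ∀ p ∈ s.offDiag, F p + F p.swap = 0 := by
      intro ⟨v, w⟩ hp
      obtain ⟨hv, hw, hvw⟩ := Finset.mem_offDiag.1 hp
      simp only [F, Prod.swap, Finset.erase_right_comm (a := v), ← add_smul,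
        neg_one_pow_vIdx_erase_add hv hw hvw, zero_smul]
    calc bdry k n (bdry k (n + 1) (Finsupp.single ⟨s, hs⟩ b))
        = b • ∑ v ∈ s, ∑ w ∈ s.erase v, F (v, w) := by
          rw [bdry_single, map_smul, map_sum]
          refine congrArg _ (Finset.sum_congr rfl fun v hv => ?_)
          rw [map_smul, bdry_faceChain (by rw [Finset.card_erase_of_mem hv, hs]; rfl),
            Finset.smul_sum]
          exact Finset.sum_congr rfl fun w _ => smul_smul _ _ _
      _ = b • ∑ p ∈ s.offDiag, F p := by
          rw [Finset.sum_finset_product s.offDiag s (fun v => s.erase v) fun p => by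
            simp only [Finset.mem_offDiag, Finset.mem_erase]; tauto]
      _ = 0 := by
          rw [Finset.sum_involution (f := F) (fun p _ => p.swap) swap_cancel ?_ ?_ fun _ _ => rfl,
            smul_zero]
          · exact fun p hp _ h => (Finset.mem_offDiag.1 hp).2.2 (congrArg Prod.fst h).symm
          · intro p hp
            obtain ⟨hv, hw, hvw⟩ := Finset.mem_offDiag.1 hp
            exact Finset.mem_offDiag.2 ⟨hw, hv, hvw.symm⟩

end Boundary

section Support

variable {k : Type*} [Field k] {V : Type*} {K : Finset (Finset V)} {n : ℕ}

theorem faceChain_mem_suppIn {s : Finset V} (hs : s ∈ K) : faceChain k n s ∈ suppIn k K n := by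
  unfold faceChain
  split_ifs with h
  · intro t ht
    rw [Finset.mem_singleton.1 (Finsupp.support_single_subset ht)]
    exact hs
  · exact Submodule.zero_mem _

theorem bdry_mem_suppIn [Fintype V] (hK : DownClosed K) {c : ChSp k V (n + 1)}
    (hc : c ∈ suppIn k K (n + 1)) :
    bdry k n c ∈ suppIn k K n := by
  classical
  rw [← c.sum_single, Finsupp.sum, map_sum]
  refine Submodule.sum_mem _ fun ⟨t, ht⟩ htc => ?_
  rw [bdry_single]
  refine Submodule.smul_mem _ _ (Submodule.sum_mem _ fun v _ => Submodule.smul_mem _ _ ?_)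
  exact faceChain_mem_suppIn (hK _ _ (hc _ htc) (Finset.erase_subset _ _))

theorem suppIn_mono {L : Finset (Finset V)} (h : K ⊆ L) : suppIn k K n ≤ suppIn k L n :=
  fun _ hc s hs => h (hc s hs)

end Support

section CohenMacaulay

variable {k : Type*} [Field k] {V : Type*} [Fintype V] {K : Finset (Finset V)}

theorem linkC_empty : linkC K ∅ = K := by
  ext γ
  simp [linkC]

theorem IsCM.zcyc_le_zbnd (hK : IsCM k K) (h0 : ∅ ∈ K) {n : ℕ}
    (hdim : n + 1 < K.sup Finset.card) :
    zcyc k K (n + 1) ≤ zbnd k K (n + 1) := by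
  have h := hK ∅ h0 n (by rw [linkC_empty, dimC]; omega)
  rwa [linkC_empty, HVanish, if_neg (by omega), show ((n : ℤ) + 1).toNat = n + 1 by omega] at h

end CohenMacaulay

section Chains

variable {P : Type*} [PartialOrder P]

theorem IsChain.exists_isGreatest {s : Finset P} (hs : IsChain (· ≤ ·) (s : Set P))
    (hne : s.Nonempty) : ∃ m, IsGreatest (s : Set P) m := by
  obtain ⟨m, hm, hmax⟩ := s.exists_maximal hne
  refine ⟨m, hm, fun x hx => ?_⟩
  obtain rfl | hxm := eq_or_ne x m
  · exact le_rfl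
  · exact (hs hx hm hxm).elim id (hmax hx)

variable [Fintype P] {S : Set P} {d : ℕ} {c : Finset P}

theorem exists_isMaxChainIn_superset (hc : ↑c ⊆ S) (hch : IsChain (· ≤ ·) (c : Set P)) :
    ∃ m : Finset P, c ⊆ m ∧ IsMaxChainIn S m := by
  classical
  let T : Finset (Finset P) := {m | ↑m ⊆ S ∧ IsChain (· ≤ ·) (m : Set P) ∧ c ⊆ m}
  obtain ⟨m, hmT, hmax⟩ := T.exists_max_image Finset.card ⟨c, by simp [T, hc, hch]⟩
  simp only [T, Finset.mem_filter, Finset.mem_univ, true_and] at hmT hmax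
  refine ⟨m, hmT.2.2, hmT.1, hmT.2.1, fun c' hc' hch' hmc' => ?_⟩
  exact Finset.eq_of_subset_of_card_le hmc' (hmax c' ⟨hc', hch', hmT.2.2.trans hmc'⟩)

namespace GradedRank

theorem card_le (hgr : GradedRank S d) (hc : ↑c ⊆ S) (hch : IsChain (· ≤ ·) (c : Set P)) :
    c.card ≤ d + 1 := by
  obtain ⟨m, hcm, hm⟩ := exists_isMaxChainIn_superset hc hch
  exact (Finset.card_le_card hcm).trans_eq (hgr m hm)

theorem exists_card_eq (hgr : GradedRank S d) :
    ∃ c : Finset P, ↑c ⊆ S ∧ IsChain (· ≤ ·) (c : Set P) ∧ c.card = d + 1 := by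
  obtain ⟨m, -, hm⟩ := exists_isMaxChainIn_superset (S := S) (c := ∅) (by simp) (by simp)
  exact ⟨m, hm.1, hm.2.1, hgr m hm⟩

theorem isMax_of_isGreatest (hgr : GradedRank S d) (hS : IsUpperSet S) (hc : ↑c ⊆ S)
    (hch : IsChain (· ≤ ·) (c : Set P)) (hcard : c.card = d + 1) {m : P}
    (hm : IsGreatest (c : Set P) m) : IsMax m := by
  classical
  intro z hmz
  by_contra hzm
  have hzc : z ∉ c := fun h => hzm (hm.2 h)
  have hins : IsChain (· ≤ ·) ((insert z c : Finset P) : Set P) := by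
    rw [Finset.coe_insert]
    exact hch.insert fun x hx _ => Or.inr ((hm.2 hx).trans hmz)
  have hins_sub : ((insert z c : Finset P) : Set P) ⊆ S := by
    rw [Finset.coe_insert]
    exact Set.insert_subset (hS hmz (hc hm.1)) hc
  have hle := hgr.card_le hins_sub hins
  rw [Finset.card_insert_of_notMem hzc, hcard] at hle
  omega

end GradedRank

theorem mem_chainsIn {s : Finset P} :
    s ∈ chainsIn S ↔ ↑s ⊆ S ∧ IsChain (· ≤ ·) (s : Set P) := by
  simp [chainsIn]

theorem chainsIn_mono {T : Set P} (h : S ⊆ T) : chainsIn S ⊆ chainsIn T := fun _ hs =>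
  mem_chainsIn.2 ⟨(mem_chainsIn.1 hs).1.trans h, (mem_chainsIn.1 hs).2⟩

theorem downClosed_chainsIn : DownClosed (chainsIn S) := fun _ _ ht hst =>
  mem_chainsIn.2 ⟨(Finset.coe_subset.2 hst).trans (mem_chainsIn.1 ht).1,
    (mem_chainsIn.1 ht).2.mono (Finset.coe_subset.2 hst)⟩

theorem GradedRank.sup_card_chainsIn (hgr : GradedRank S d) :
    (chainsIn S).sup Finset.card = d + 1 := by
  refine le_antisymm (Finset.sup_le fun s hs => ?_) ?_
  · exact hgr.card_le (mem_chainsIn.1 hs).1 (mem_chainsIn.1 hs).2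
  · obtain ⟨c, hcS, hch, hcard⟩ := hgr.exists_card_eq
    exact hcard ▸ Finset.le_sup (mem_chainsIn.2 ⟨hcS, hch⟩)

end Chains

section TopDecomposition

variable {k : Type*} [Field k] {P : Type*} [PartialOrder P] [Fintype P] {S : Set P} {m n : ℕ}

open scoped Classical

noncomputable def topPart (c : ChSp k P m) (y : P) : ChSp k P m :=
  c.filter fun t => IsGreatest (t.1 : Set P) y

theorem topPart_mem_suppIn {c : ChSp k P m} (hc : c ∈ suppIn k (chainsIn S) m) (y : P) :
    topPart c y ∈ suppIn k (chainsIn (S ∩ Set.Iic y)) m := by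
  intro t ht
  rw [topPart, Finsupp.support_filter, Finset.mem_filter] at ht
  exact mem_chainsIn.2 ⟨Set.subset_inter (mem_chainsIn.1 (hc t ht.1)).1 ht.2.2,
    (mem_chainsIn.1 (hc t ht.1)).2⟩

theorem sum_topPart (hS : IsUpperSet S) (hgr : GradedRank S (n + 1)) {c : ChSp k P (n + 2)}
    (hc : c ∈ suppIn k (chainsIn S) (n + 2)) :
    ∑ y ∈ Finset.univ.filter IsMax, topPart c y = c := by
  ext t
  simp only [Finsupp.finsetSum_apply, topPart, Finsupp.filter_apply]
  by_cases hct : c t = 0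
  · simp [hct]
  obtain ⟨htS, htch⟩ := mem_chainsIn.1 (hc t (Finsupp.mem_support_iff.2 hct))
  obtain ⟨y, hy⟩ := htch.exists_isGreatest (Finset.card_pos.1 (by rw [t.2]; omega))
  rw [Finset.sum_eq_single_of_mem y
    (Finset.mem_filter.2 ⟨Finset.mem_univ _, hgr.isMax_of_isGreatest hS htS htch t.2 hy⟩)
    fun y' _ hy' => if_neg fun h => hy' (h.unique hy), if_pos hy]

theorem bdry_topPart_mem_zcyc (hS : IsUpperSet S) (hgr : GradedRank S (n + 1))
    {c : ChSp k P (n + 2)} (hc : c ∈ suppIn k (chainsIn S) (n + 2))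
    (hbc : bdry k (n + 1) c ∈ suppIn k (chainsIn {x ∈ S | ¬IsMax x}) (n + 1)) {y : P}
    (hy : IsMax y) :
    bdry k (n + 1) (topPart c y) ∈ zcyc k (chainsIn (S ∩ Set.Iio y)) (n + 1) := by
  have below : ∀ y',
      bdry k (n + 1) (topPart c y') ∈ suppIn k (chainsIn (S ∩ Set.Iic y')) (n + 1) :=
    fun y' => bdry_mem_suppIn downClosed_chainsIn (topPart_mem_suppIn hc y')
  refine ⟨fun s hs => ?_, bdry_bdry _⟩
  obtain ⟨hsS, hsch⟩ := mem_chainsIn.1 (below y s hs)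
  suffices hys : y ∉ s.1 by
    refine mem_chainsIn.2 ⟨fun x hx => ⟨(hsS hx).1, lt_of_le_of_ne (hsS hx).2 ?_⟩, hsch⟩
    rintro rfl
    exact hys hx
  intro hys
  have others : ∀ y' ∈ Finset.univ.filter IsMax, y' ≠ y →
      bdry k (n + 1) (topPart c y') s = 0 := by
    intro y' _ hy'y
    by_contra h
    have hyy' : y ≤ y' := (mem_chainsIn.1 (below y' s (Finsupp.mem_support_iff.2 h))).1 hys |>.2
    exact hy'y (le_antisymm (hy hyy') hyy')
  have hcoeff : bdry k (n + 1) c s = bdry k (n + 1) (topPart c y) s := by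
    conv_lhs => rw [← sum_topPart hS hgr hc]
    rw [map_sum, Finsupp.finsetSum_apply,
      Finset.sum_eq_single_of_mem y (Finset.mem_filter.2 ⟨Finset.mem_univ _, hy⟩) others]
  have hbcs : s ∈ (bdry k (n + 1) c).support := by
    rwa [Finsupp.mem_support_iff, hcoeff, ← Finsupp.mem_support_iff]
  exact ((mem_chainsIn.1 (hbc s hbcs)).1 hys).2 hy

theorem zcyc_le_iSup_zcyc (hS : IsUpperSet S) (hgr : GradedRank S (n + 1))
    (hvan : zcyc k (chainsIn S) (n + 1) ≤ zbnd k (chainsIn S) (n + 1)) :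
    zcyc k (chainsIn {x ∈ S | ¬IsMax x}) (n + 1) ≤
      ⨆ y ∈ Finset.univ.filter IsMax, zcyc k (chainsIn (S ∩ Set.Iio y)) (n + 1) := by
  intro z ⟨hzQ, hzker⟩
  have hzS : z ∈ zcyc k (chainsIn S) (n + 1) :=
    ⟨suppIn_mono (chainsIn_mono fun _ hx => hx.1) hzQ, hzker⟩
  obtain ⟨c, hc, rfl⟩ := Submodule.mem_map.1 (hvan hzS)
  rw [← sum_topPart hS hgr hc, map_sum]
  refine Submodule.sum_mem _ fun y hy => Submodule.mem_iSup_of_mem y ?_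
  refine Submodule.mem_iSup_of_mem hy ?_
  exact bdry_topPart_mem_zcyc hS hgr hc hzQ (Finset.mem_filter.1 hy).2

end TopDecomposition

open scoped Classical in
/-- If `P ∖ {0̂}` is Cohen-Macaulay over `k` of rank `d-1` and `Q` is `P`
minus `0̂` and all maximal elements, then `H̃_{d-2}(Δ(Q); k)` is spanned by the images of
the maps `H̃_{d-2}(Δ((0̂,y)); k) → H̃_{d-2}(Δ(Q); k)` induced by inclusion, for `y` ranging
over the maximal elements of `P`: every supported `(d-2)`-cycle lies in the sum of the
cycle spaces of the subcomplexes `Δ((0̂,y))` together with the boundaries. -/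
theorem stmt5 (k : Type*) [Field k] (P : Type*) [PartialOrder P] [Fintype P] [OrderBot P]
    (d : ℕ) (hd : 2 ≤ d)
    (hgr : GradedRank {x : P | x ≠ ⊥} (d - 1))
    (hCM : IsCM k (chainsIn {x : P | x ≠ ⊥})) :
    zcyc k (chainsIn {x : P | x ≠ ⊥ ∧ ¬IsMax x}) (d - 2 + 1) ≤
      (⨆ y ∈ Finset.univ.filter fun y : P => IsMax y,
        zcyc k (chainsIn (Set.Ioo (⊥ : P) y)) (d - 2 + 1)) ⊔
      zbnd k (chainsIn {x : P | x ≠ ⊥ ∧ ¬IsMax x}) (d - 2 + 1) := by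
  obtain ⟨n, rfl⟩ : ∃ n, d = n + 2 := ⟨d - 2, by omega⟩
  change GradedRank _ (n + 1) at hgr
  change zcyc k _ (n + 1) ≤ (⨆ y ∈ _, zcyc k _ (n + 1)) ⊔ zbnd k _ (n + 1)
  have hS : IsUpperSet {x : P | x ≠ ⊥} := fun x y hxy hx hy => hx (le_bot_iff.1 (hy ▸ hxy))
  have hvan := hCM.zcyc_le_zbnd (n := n) (mem_chainsIn.2 (by simp))
    (by rw [hgr.sup_card_chainsIn]; omega)
  have hIoo : ∀ y : P, {x : P | x ≠ ⊥} ∩ Set.Iio y = Set.Ioo ⊥ y := fun y => by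
    ext x
    simp [bot_lt_iff_ne_bot]
  refine le_sup_of_le_left ((zcyc_le_iSup_zcyc hS hgr hvan).trans_eq ?_)
  simp only [hIoo]
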